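/- For every prime l, integer k ≥ 1, prime p, and integer t, |log(v_{l,k}(t²−4p)) − log(v_l(t²−4p))| = O(l^{−k}), with an absolute implied constant. -/

import Mathlib

/-- largest δ with l^(2δ) ∣ Δ (for l = 2, with the extra condition Δ/4^δ ≡ 0,1 mod 4) -/
noncomputable def gdelta (l : ℕ) (Δ : ℤ) : ℕ :=
  if l = 2 then sSup {δ : ℕ | (4:ℤ)^δ ∣ Δ ∧ (Δ / 4^δ % 4 = 0 ∨ Δ / 4^δ % 4 = 1)}
  else sSup {δ : ℕ | (l:ℤ)^(2*δ) ∣ Δ}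

/-- Kronecker symbol (m / l) for a prime l: for odd l the Jacobi (Legendre) symbol, and for
l = 2 determined by m mod 8 (where m ≡ 0, 1 mod 4). -/
noncomputable def kron (l : ℕ) (m : ℤ) : ℤ :=
  if l = 2 then (if m % 8 = 1 then 1 else if m % 8 = 5 then -1 else 0)
  else jacobiSym m l

/-- Gekeler's local weight v_l(Δ): with δ = gdelta l Δ, it is
(1 − l⁻²)⁻¹ (1 + l⁻¹ + c) where c = 0, −(l+1)l^(−δ−2), −2l^(−δ−1) according as the
Kronecker symbol (Δ/l^(2δ) over l) is +1, 0, −1. -/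
noncomputable def gv (l : ℕ) (Δ : ℤ) : ℝ :=
  (1 - ((l:ℝ)⁻¹)^2)⁻¹ * (1 + (l:ℝ)⁻¹ +
    (if kron l (Δ / (l:ℤ)^(2 * gdelta l Δ)) = 1 then 0
     else if kron l (Δ / (l:ℤ)^(2 * gdelta l Δ)) = 0 then
       -((l:ℝ)+1) * ((l:ℝ)⁻¹)^(gdelta l Δ + 2)
     else -2 * ((l:ℝ)⁻¹)^(gdelta l Δ + 1)))

/-- Truncated weight v_{l,k}(Δ): equals v_l(Δ) unless l^(2k) ∣ Δ, in which case it is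
(1 − l⁻²)⁻¹ (1 + l⁻¹). -/
noncomputable def gvk (l k : ℕ) (Δ : ℤ) : ℝ :=
  if ((l:ℤ))^(2*k) ∣ Δ then (1 - ((l:ℝ)⁻¹)^2)⁻¹ * (1 + (l:ℝ)⁻¹) else gv l Δ

/-!
If `l^(2k) ∤ Δ` the two weights agree. Otherwise `Δ = t² - 4p ≠ 0` (a prime is not a square), so
`δ ≥ k - 1`, and `v_l(Δ) = (1 - l⁻²)⁻¹ (1 + l⁻¹ + c)` differs from `v_{l,k}(Δ)` only by the
correction `-2 l^(-δ-1) ≤ c ≤ 0`, of size at most `2 l^(-k)`. Both second factors are at least `1/2`,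
where `log` is `2`-Lipschitz, so the logarithms differ by at most `4 l^(-k)`.
-/

open Real

lemma sq_sub_four_mul_prime_ne_zero (t : ℤ) {p : ℕ} (hp : p.Prime) : t ^ 2 - 4 * p ≠ 0 := by
  intro h
  obtain ⟨s, rfl⟩ : Even t := by
    rw [← Int.even_pow' two_ne_zero]; exact ⟨2 * p, by linarith⟩
  have hs : (p : ℤ) = s * s := by linarith
  exact (Nat.prime_iff_prime_int.mp hp).not_isSquare ⟨s, hs⟩

lemma le_natAbs_of_pow_dvd {b Δ : ℤ} {n : ℕ} (hb : 2 ≤ b) (hΔ : Δ ≠ 0) (h : b ^ n ∣ Δ) :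
    n ≤ Δ.natAbs := by
  have h2 : (2 : ℤ) ^ n ≤ b ^ n := pow_le_pow_left₀ (by norm_num) hb n
  have hle : b ^ n ≤ |Δ| := Int.le_of_dvd (abs_pos.mpr hΔ) ((dvd_abs _ _).mpr h)
  have hn : (n : ℤ) < 2 ^ n := by exact_mod_cast Nat.lt_two_pow_self
  zify
  linarith

lemma le_gdelta_of_pow_dvd {l k : ℕ} {Δ : ℤ} (hl : 2 ≤ l) (hΔ : Δ ≠ 0)
    (h : (l : ℤ) ^ (2 * (k + 1)) ∣ Δ) : k ≤ gdelta l Δ := by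
  unfold gdelta
  split_ifs with hl2
  · subst hl2
    obtain ⟨m, hm⟩ : (4 : ℤ) ^ k * 4 ∣ Δ := by simpa [pow_mul, ← pow_succ] using h
    refine le_csSup ⟨Δ.natAbs, fun δ hδ => le_natAbs_of_pow_dvd (by norm_num) hΔ hδ.1⟩ ?_
    refine ⟨⟨4 * m, by rw [hm, mul_assoc]⟩, Or.inl ?_⟩
    rw [hm, mul_assoc, Int.mul_ediv_cancel_left _ (by positivity)]
    exact Int.mul_emod_right 4 m
  · refine le_csSup ⟨Δ.natAbs, fun δ hδ => ?_⟩ (dvd_trans (pow_dvd_pow _ (by omega)) h)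
    have := le_natAbs_of_pow_dvd (by exact_mod_cast hl) hΔ hδ
    omega

lemma exists_gv_eq {l : ℕ} (hl : 1 ≤ l) (Δ : ℤ) :
    ∃ c : ℝ, -2 * ((l : ℝ)⁻¹) ^ (gdelta l Δ + 1) ≤ c ∧ c ≤ 0 ∧
      gv l Δ = (1 - ((l : ℝ)⁻¹) ^ 2)⁻¹ * (1 + (l : ℝ)⁻¹ + c) := by
  have hl' : (1 : ℝ) ≤ l := by exact_mod_cast hl
  set x : ℝ := (l : ℝ)⁻¹
  have hx0 : 0 ≤ x := by positivity
  have hx1 : x ≤ 1 := inv_le_one_of_one_le₀ hl'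
  have hxδ : 0 ≤ x ^ (gdelta l Δ + 1) := by positivity
  have hlx : ((l : ℝ) + 1) * x ^ (gdelta l Δ + 2) = (1 + x) * x ^ (gdelta l Δ + 1) := by
    rw [pow_succ' x (gdelta l Δ + 1)]
    linear_combination x ^ (gdelta l Δ + 1) * mul_inv_cancel₀ (by positivity : (l : ℝ) ≠ 0)
  refine ⟨_, ?_, ?_, rfl⟩ <;> split_ifs
  all_goals nlinarith

lemma abs_log_sub_log_le_div {y z : ℝ} (hz : 0 < z) (hzy : z ≤ y) :
    |log y - log z| ≤ (y - z) / z := by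
  rw [abs_of_nonneg (sub_nonneg.mpr (log_le_log hz hzy)), ← log_div (by linarith) hz.ne']
  calc log (y / z) ≤ y / z - 1 := log_le_sub_one_of_pos (div_pos (by linarith) hz)
    _ = (y - z) / z := by field_simp

theorem stmt7 :
    ∃ C > (0:ℝ), ∀ (l k p : ℕ) (t : ℤ), l.Prime → 1 ≤ k → p.Prime →
      |Real.log (gvk l k (t^2 - 4*p)) - Real.log (gv l (t^2 - 4*p))| ≤ C / (l:ℝ)^k := by
  refine ⟨4, by norm_num, fun l k p t hl hk hp => ?_⟩
  by_cases hdvd : (l : ℤ) ^ (2 * k) ∣ t ^ 2 - 4 * p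
  swap
  · rw [gvk, if_neg hdvd, sub_self, abs_zero]
    positivity
  obtain ⟨k, rfl⟩ : ∃ m, k = m + 1 := ⟨k - 1, by omega⟩
  have hδ := le_gdelta_of_pow_dvd hl.two_le (sq_sub_four_mul_prime_ne_zero t hp) hdvd
  obtain ⟨c, hc_lo, hc_hi, hgv⟩ := exists_gv_eq hl.one_lt.le (t ^ 2 - 4 * p)
  set x : ℝ := (l : ℝ)⁻¹
  have hx0 : 0 < x := inv_pos.mpr (by exact_mod_cast hl.pos)
  have hx : x ≤ 1 / 2 := by
    rw [one_div]; exact inv_anti₀ (by norm_num) (by exact_mod_cast hl.two_le)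
  have hc : -c ≤ 2 * x ^ (k + 1) := by
    have : x ^ (gdelta l (t ^ 2 - 4 * p) + 1) ≤ x ^ (k + 1) :=
      pow_le_pow_of_le_one hx0.le (by linarith) (by omega)
    linarith
  have hz : 1 / 2 ≤ 1 + x + c := by
    have : x ^ (k + 1) ≤ x := pow_le_of_le_one hx0.le (by linarith) (by omega)
    linarith
  have hA : (1 - x ^ 2)⁻¹ ≠ 0 := inv_ne_zero (by nlinarith)
  rw [gvk, if_pos hdvd, hgv, log_mul hA (by linarith), log_mul hA (by linarith),
    add_sub_add_left_eq_sub]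
  calc _ ≤ (1 + x - (1 + x + c)) / (1 + x + c) :=
        abs_log_sub_log_le_div (by linarith) (by linarith)
    _ ≤ 4 * x ^ (k + 1) := by
        rw [div_le_iff₀ (by linarith)]
        nlinarith
    _ = 4 / (l : ℝ) ^ (k + 1) := by rw [div_eq_mul_inv, inv_pow]
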